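/- arXiv:1808.06886 — 4 statements merged into one kernel-verified Lean document; each statement's English description precedes it below -/
import Mathlib

section
/- For every straight-line program G, the length of its output satisfies |eval(G)| ≤ 3^{|G|/3}. -/
/-- A straight-line program over alphabet `α`: an acyclic context-free grammar
in which every variable has exactly one production. Variables are `Fin n`,
and acyclicity is enforced by requiring that the right-hand side of variable `i`
only mentions variables `j < i`. -/
structure SLP (α : Type*) where
  n : ℕ
  rhs : Fin n → List (Fin n ⊕ α)
  start : Fin n
  acyclic : ∀ i j : Fin n, Sum.inl j ∈ rhs i → j < i

/-- The word derived from a variable of a straight-line program. -/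
def SLP.evalVar {α : Type*} (P : SLP α) (i : Fin P.n) : List α :=
  (P.rhs i).attach.flatMap fun s =>
    match h : s.1 with
    | Sum.inl j => P.evalVar j
    | Sum.inr a => [a]
termination_by i.val
decreasing_by
  exact P.acyclic i j (h ▸ s.2)

/-- The output of a straight-line program. -/
def SLP.eval {α : Type*} (P : SLP α) : List α := P.evalVar P.start

/-- The size of a straight-line program: the sum of the lengths of the
right-hand sides of its productions. -/
def SLP.size {α : Type*} (P : SLP α) : ℕ := ∑ i : Fin P.n, (P.rhs i).length

lemma SLP.evalVar_eq {α : Type*} (P : SLP α) (i : Fin P.n) :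
    P.evalVar i = (P.rhs i).flatMap (Sum.elim (fun j => P.evalVar j) (fun a => [a])) := by
  conv_rhs => rw [← List.attach_map_subtype_val (P.rhs i), List.flatMap_map]
  rw [SLP.evalVar]
  congr 1
  funext s
  rcases s with ⟨x, hx⟩
  cases x <;> rfl

lemma SLP.length_evalVar {α : Type*} (P : SLP α) (i : Fin P.n) :
    (P.evalVar i).length =
      ((P.rhs i).map (Sum.elim (fun j => (P.evalVar j).length) (fun _ => 1))).sum := by
  rw [P.evalVar_eq i, List.length_flatMap]
  exact congrArg List.sum (List.map_congr_left fun x _ => by cases x <;> rfl)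

lemma cube_le_three_pow : ∀ k : ℕ, k ^ 3 ≤ 3 ^ k := by
  intro k
  induction k with
  | zero => norm_num
  | succ n ih =>
    match n, ih with
    | 0, _ => norm_num
    | 1, _ => norm_num
    | 2, _ => norm_num
    | (m+3), ih =>
      calc (m+3+1) ^ 3 ≤ 3 * (m+3) ^ 3 := by nlinarith [sq_nonneg m, Nat.zero_le m]
        _ ≤ 3 * 3 ^ (m+3) := Nat.mul_le_mul_left 3 ih
        _ = 3 ^ (m+3+1) := by ring

lemma nat_le_rpow (k : ℕ) : (k : ℝ) ≤ (3 : ℝ) ^ ((k : ℝ) / 3) := by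
  have h : ((k : ℝ)) ^ (3 : ℕ) ≤ (3 : ℝ) ^ (k : ℕ) := by
    exact_mod_cast cube_le_three_pow k
  have hk : (0:ℝ) ≤ (k:ℝ) := Nat.cast_nonneg k
  have h2 := Real.rpow_le_rpow (by positivity) h (by norm_num : (0:ℝ) ≤ 1/3)
  rw [← Real.rpow_natCast (k:ℝ) 3, ← Real.rpow_natCast (3:ℝ) k,
      ← Real.rpow_mul hk, ← Real.rpow_mul (by norm_num)] at h2
  have e1 : ((3:ℕ):ℝ) * (1/3) = 1 := by norm_num
  have e2 : ((k:ℕ):ℝ) * (1/3) = (k:ℝ)/3 := by ring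
  rwa [e1, e2, Real.rpow_one] at h2

lemma SLP.evalVar_length_le {α : Type*} (P : SLP α) (i : Fin P.n) :
    ((P.evalVar i).length : ℝ) ≤
      (3:ℝ) ^ (((∑ t ∈ Finset.Iic i, (P.rhs t).length : ℕ) : ℝ) / 3) := by
  have hS : ∀ j : Fin P.n, j < i →
      (∑ t ∈ Finset.Iic j, (P.rhs t).length) + (P.rhs i).length
        ≤ ∑ t ∈ Finset.Iic i, (P.rhs t).length := by
    intro j hj
    have hsub : Finset.Iic j ⊆ Finset.Iio i := fun t ht =>
      Finset.mem_Iio.2 (lt_of_le_of_lt (Finset.mem_Iic.1 ht) hj)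
    have h1 : (∑ t ∈ Finset.Iic j, (P.rhs t).length)
        ≤ ∑ t ∈ Finset.Iio i, (P.rhs t).length :=
      Finset.sum_le_sum_of_subset hsub
    have h2 : (P.rhs i).length + (∑ t ∈ Finset.Iio i, (P.rhs t).length)
        = ∑ t ∈ Finset.Iic i, (P.rhs t).length := by
      rw [← Finset.Iio_insert i, Finset.sum_insert (by simp)]
    omega
  have hkS : (P.rhs i).length ≤ ∑ t ∈ Finset.Iic i, (P.rhs t).length :=
    Finset.single_le_sum (f := fun t => (P.rhs t).length)
      (fun _ _ => Nat.zero_le _) (Finset.mem_Iic.2 le_rfl)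
  rw [P.length_evalVar i, Nat.cast_list_sum, List.map_map]
  set S : ℕ := ∑ t ∈ Finset.Iic i, (P.rhs t).length with hSdef
  set k : ℕ := (P.rhs i).length with hkdef
  have key : ∀ x ∈ (P.rhs i).map
      ((Nat.cast : ℕ → ℝ) ∘ Sum.elim (fun j => (P.evalVar j).length) fun _ => 1),
      x ≤ (3:ℝ) ^ (((S:ℝ) - k)/3) := by
    intro x hx
    rw [List.mem_map] at hx
    obtain ⟨a, ha, rfl⟩ := hx
    cases a with
    | inl j =>
      have hj : j < i := P.acyclic i j ha
      have ih := P.evalVar_length_le j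
      simp only [Function.comp, Sum.elim_inl]
      refine le_trans ih (Real.rpow_le_rpow_of_exponent_le (by norm_num) ?_)
      have h3 : ((∑ t ∈ Finset.Iic j, (P.rhs t).length : ℕ) : ℝ) + k ≤ S := by
        exact_mod_cast hS j hj
      linarith
    | inr a =>
      simp only [Function.comp, Sum.elim_inr, Nat.cast_one]
      calc (1:ℝ) = 3 ^ (0:ℝ) := (Real.rpow_zero 3).symm
        _ ≤ _ := Real.rpow_le_rpow_of_exponent_le (by norm_num) (by
            have : (k:ℝ) ≤ S := by exact_mod_cast hkS
            linarith)
  have hsum := List.sum_le_card_nsmul _ _ key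
  rw [List.length_map] at hsum
  refine le_trans hsum ?_
  rw [nsmul_eq_mul]
  have hkk : (k:ℝ) ≤ (3:ℝ) ^ ((k:ℝ)/3) := nat_le_rpow k
  calc (k:ℝ) * (3:ℝ) ^ (((S:ℝ)-k)/3)
      ≤ (3:ℝ) ^ ((k:ℝ)/3) * (3:ℝ) ^ (((S:ℝ)-k)/3) :=
        mul_le_mul_of_nonneg_right hkk (Real.rpow_nonneg (by norm_num) _)
    _ = (3:ℝ) ^ ((S:ℝ)/3) := by
        rw [← Real.rpow_add (by norm_num)]
        congr 1
        ring
termination_by i.val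
decreasing_by exact hj

/-- For every straight-line program `G`, `|eval(G)| ≤ 3^{|G|/3}`. -/
theorem slp_eval_length_le {α : Type*} (P : SLP α) :
    (P.eval.length : ℝ) ≤ (3 : ℝ) ^ ((P.size : ℝ) / 3) := by
  refine le_trans (P.evalVar_length_le P.start) ?_
  apply Real.rpow_le_rpow_of_exponent_le (by norm_num)
  have h : (∑ t ∈ Finset.Iic P.start, (P.rhs t).length) ≤ P.size :=
    Finset.sum_le_sum_of_subset (Finset.subset_univ _)
  have h' : ((∑ t ∈ Finset.Iic P.start, (P.rhs t).length : ℕ) : ℝ) ≤ (P.size : ℝ) := by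
    exact_mod_cast h
  linarith
end

section
/- Let M be a deterministic finite automaton with state set Q and let w be a word. If w^n ∈ L(M) for all n with 0 ≤ n ≤ |Q|, then w^n ∈ L(M) for all natural numbers n. -/
/-- The `n`-fold concatenation `w^n` of a word `w`. -/
def repw {α : Type*} (w : List α) : ℕ → List α
  | 0 => []
  | n + 1 => w ++ repw w n

lemma evalFrom_repw {α σ : Type*} (M : DFA α σ) (w : List α) :
    ∀ (n : ℕ) (q : σ), M.evalFrom q (repw w n) = (fun p => M.evalFrom p w)^[n] q := by
  intro n
  induction n with
  | zero => intro q; rfl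
  | succ k ih =>
    intro q
    rw [repw, DFA.evalFrom_of_append, ih, Function.iterate_succ_apply]

/-- If `M` is a DFA with state set `Q` and `w^n ∈ L(M)` for all `0 ≤ n ≤ |Q|`,
then `w^n ∈ L(M)` for all natural numbers `n`. -/
theorem dfa_accepts_all_powers {α σ : Type*} [Fintype σ] (M : DFA α σ) (w : List α)
    (h : ∀ n : ℕ, n ≤ Fintype.card σ → repw w n ∈ M.accepts) :
    ∀ n : ℕ, repw w n ∈ M.accepts := by
  set g : σ → σ := fun p => M.evalFrom p w with hg
  -- pigeonhole: two equal states among the first card σ + 1 iterates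
  obtain ⟨a, b, hab, heq⟩ :
      ∃ a b : Fin (Fintype.card σ + 1), a ≠ b ∧ g^[a.1] M.start = g^[b.1] M.start := by
    have := Fintype.exists_ne_map_eq_of_card_lt
      (fun k : Fin (Fintype.card σ + 1) => g^[k.1] M.start) (by simp)
    obtain ⟨a, b, hne, he⟩ := this
    exact ⟨a, b, hne, he⟩
  wlog hlt : a.1 < b.1 generalizing a b
  · exact this b a hab.symm heq.symm (by have h2 : (a:ℕ) ≠ b := Fin.val_ne_of_ne hab; omega)
  · intro n
    induction n using Nat.strong_induction_on with
    | _ n ih =>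
      by_cases hn : n ≤ Fintype.card σ
      · exact h n hn
      · push_neg at hn
        have hbn : b.1 ≤ n := by have := b.2; omega
        have key : g^[n] M.start = g^[n - (b.1 - a.1)] M.start := by
          have : n = (n - b.1) + b.1 := by omega
          rw [this, Function.iterate_add_apply, ← heq, ← Function.iterate_add_apply]
          congr 1
          omega
        have hmem := ih (n - (b.1 - a.1)) (by omega)
        simp only [DFA.mem_accepts, DFA.eval, evalFrom_repw] at hmem ⊢
        rw [key]
        exact hmem
end

section
/- In a δ-hyperbolic geodesic metric space, let a geodesic quadrilateral have sides labelled by geodesic words a, u, b, v with vb =_G au (i.e., the path labelled v followed by b has the same endpoints as the path labelled a followed by u). If u = u'u'' with |u'| ≥ |a| + 2δ and |u''| ≥ |b| + 2δ, then there is a factorization v = v'v'' and a geodesic word c with |c| ≤ 2δ such that v'c =_G au' and v''b =_G cu''. -/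
/-- The element of the group `G` represented by the word `w` over the
generating set, where `σ` maps generators to group elements. -/
def evalW {α : Type*} {G : Type*} [Group G] (σ : α → G) (w : List α) : G :=
  (w.map σ).prod

/-- The word length of a group element: the smallest length of a word over the
generators representing it. -/
noncomputable def wlen {α : Type*} {G : Type*} [Group G] (σ : α → G) (g : G) : ℕ :=
  sInf {n | ∃ w : List α, evalW σ w = g ∧ w.length = n}

/-- The word metric on the Cayley graph of `G` with respect to `σ`. -/
noncomputable def gdist {α : Type*} {G : Type*} [Group G] (σ : α → G) (g h : G) : ℕ :=
  wlen σ (g⁻¹ * h)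

/-- `σ` lists a generating set of `G`: every element is represented by a word. -/
def Generates {α : Type*} {G : Type*} [Group G] (σ : α → G) : Prop :=
  ∀ g : G, ∃ w : List α, evalW σ w = g

/-- The generating set is symmetric: it is closed under inversion. -/
def SymmetricGens {α : Type*} {G : Type*} [Group G] (σ : α → G) : Prop :=
  ∀ a : α, ∃ b : α, σ b = (σ a)⁻¹

/-- A word is geodesic if it labels a geodesic path in the Cayley graph,
i.e. its length equals the word length of the element it represents. -/
def IsGeodesicWord {α : Type*} {G : Type*} [Group G] (σ : α → G) (w : List α) : Prop :=
  wlen σ (evalW σ w) = w.length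

/-- The Cayley graph of `G` (w.r.t. `σ`) is `δ`-hyperbolic: every geodesic
triangle is `δ`-slim.  A triangle is encoded by geodesic words `x, y, z` with
`eval x · eval y · eval z = 1`; the side labelled `x` starts at `1`, the side
labelled `y` starts at `eval x`, the side labelled `z` starts at `eval x · eval y`.
Slimness: every point on the first side is within distance `δ` of the union of
the other two sides (by symmetry of the quantification this applies to each side). -/
def DeltaHyperbolic {α : Type*} {G : Type*} [Group G] (σ : α → G) (δ : ℕ) : Prop :=
  ∀ x y z : List α, IsGeodesicWord σ x → IsGeodesicWord σ y → IsGeodesicWord σ z →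
    evalW σ x * evalW σ y * evalW σ z = 1 →
    ∀ i ≤ x.length, ∃ j : ℕ,
      (j ≤ y.length ∧
        gdist σ (evalW σ (x.take i)) (evalW σ x * evalW σ (y.take j)) ≤ δ) ∨
      (j ≤ z.length ∧
        gdist σ (evalW σ (x.take i)) (evalW σ x * evalW σ y * evalW σ (z.take j)) ≤ δ)


section Helpers
variable {α : Type*} {G : Type*} [Group G] (σ : α → G)

theorem evalW_append (w1 w2 : List α) :
    evalW σ (w1 ++ w2) = evalW σ w1 * evalW σ w2 := by
  simp [evalW]

theorem wlen_le {g : G} {w : List α} (h : evalW σ w = g) : wlen σ g ≤ w.length :=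
  Nat.sInf_le ⟨w, h, rfl⟩

theorem exists_geodesic_rep (hgen : Generates σ) (g : G) :
    ∃ c : List α, evalW σ c = g ∧ IsGeodesicWord σ c ∧ c.length = wlen σ g := by
  have hne : {n | ∃ w : List α, evalW σ w = g ∧ w.length = n}.Nonempty := by
    obtain ⟨w, hw⟩ := hgen g
    exact ⟨w.length, w, hw, rfl⟩
  obtain ⟨w, hw, hl⟩ := Nat.sInf_mem hne
  exact ⟨w, hw, by rw [IsGeodesicWord, hw]; exact hl.symm, hl⟩

theorem wlen_mul_le (hgen : Generates σ) (g h : G) :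
    wlen σ (g * h) ≤ wlen σ g + wlen σ h := by
  obtain ⟨c1, hc1, _, hl1⟩ := exists_geodesic_rep σ hgen g
  obtain ⟨c2, hc2, _, hl2⟩ := exists_geodesic_rep σ hgen h
  have : evalW σ (c1 ++ c2) = g * h := by rw [evalW_append, hc1, hc2]
  calc wlen σ (g * h) ≤ (c1 ++ c2).length := wlen_le σ this
    _ = wlen σ g + wlen σ h := by simp [hl1, hl2]

theorem exists_inv_word (hsym : SymmetricGens σ) (w : List α) :
    ∃ w' : List α, evalW σ w' = (evalW σ w)⁻¹ ∧ w'.length = w.length := by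
  induction w with
  | nil => exact ⟨[], by simp [evalW], rfl⟩
  | cons x t ih =>
    obtain ⟨t', ht', hl⟩ := ih
    obtain ⟨y, hy⟩ := hsym x
    refine ⟨t' ++ [y], ?_, by simp [hl]⟩
    rw [evalW_append, ht']
    simp [evalW, hy, mul_comm]

theorem wlen_inv (hsym : SymmetricGens σ) (g : G) :
    wlen σ g⁻¹ = wlen σ g := by
  have key : ∀ h : G, wlen σ h⁻¹ ≤ wlen σ h := by
    intro h
    by_cases hne : {n | ∃ w : List α, evalW σ w = h ∧ w.length = n}.Nonempty
    · obtain ⟨w, hw, hl⟩ := Nat.sInf_mem hne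
      obtain ⟨w', hw', hl'⟩ := exists_inv_word σ hsym w
      calc wlen σ h⁻¹ ≤ w'.length := wlen_le σ (by rw [hw', hw])
        _ = wlen σ h := by rw [hl']; exact hl
    · have hne' : ¬ {n | ∃ w : List α, evalW σ w = h⁻¹ ∧ w.length = n}.Nonempty := by
        rintro ⟨n, w, hw, -⟩
        obtain ⟨w', hw', -⟩ := exists_inv_word σ hsym w
        exact hne ⟨w'.length, w', by rw [hw', hw, inv_inv], rfl⟩
      rw [wlen, wlen, Set.not_nonempty_iff_eq_empty.mp hne,
          Set.not_nonempty_iff_eq_empty.mp hne']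
  exact le_antisymm (key g) (by simpa using key g⁻¹)

theorem gdist_symm (hsym : SymmetricGens σ) (g h : G) :
    gdist σ g h = gdist σ h g := by
  rw [gdist, gdist, ← wlen_inv σ hsym]
  congr 1
  group

theorem gdist_triangle (hgen : Generates σ) (x y z : G) :
    gdist σ x z ≤ gdist σ x y + gdist σ y z := by
  rw [gdist, gdist, gdist]
  have : x⁻¹ * z = (x⁻¹ * y) * (y⁻¹ * z) := by group
  rw [this]
  exact wlen_mul_le σ hgen _ _

theorem gdist_left (g x y : G) : gdist σ (g * x) (g * y) = gdist σ x y := by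
  rw [gdist, gdist]
  congr 1
  group

theorem geodesic_take_drop (hgen : Generates σ) {w : List α}
    (hw : IsGeodesicWord σ w) {i : ℕ} (hi : i ≤ w.length) :
    wlen σ (evalW σ (w.take i)) = i ∧ wlen σ (evalW σ (w.drop i)) = w.length - i := by
  have h1 : wlen σ (evalW σ (w.take i)) ≤ i :=
    le_trans (wlen_le σ rfl) (by simp [hi])
  have h2 : wlen σ (evalW σ (w.drop i)) ≤ w.length - i :=
    le_trans (wlen_le σ rfl) (by simp)
  have h3 : w.length ≤ wlen σ (evalW σ (w.take i)) + wlen σ (evalW σ (w.drop i)) := by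
    have h4 := wlen_mul_le σ hgen (evalW σ (w.take i)) (evalW σ (w.drop i))
    rw [← evalW_append, List.take_append_drop] at h4
    rw [← hw]
    exact h4
  omega

end Helpers

/-- Lemma on geodesic quadrilaterals: if `vb =_G au` with `a, b, u, v` geodesic,
and `u = u'u''` with `|u'| ≥ |a| + 2δ` and `|u''| ≥ |b| + 2δ`, then there is a
factorization `v = v'v''` and a geodesic word `c` with `|c| ≤ 2δ` such that
`v'c =_G au'` and `v''b =_G cu''`. -/
theorem quadrilateral_split {α : Type*} {G : Type*} [Group G] [Fintype α]
    (σ : α → G) (δ : ℕ)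
    (hgen : Generates σ) (hsym : SymmetricGens σ) (hhyp : DeltaHyperbolic σ δ)
    (a b u v : List α)
    (ha : IsGeodesicWord σ a) (hb : IsGeodesicWord σ b)
    (hu : IsGeodesicWord σ u) (hv : IsGeodesicWord σ v)
    (heq : evalW σ v * evalW σ b = evalW σ a * evalW σ u)
    (u' u'' : List α) (hsplit : u = u' ++ u'')
    (h1 : a.length + 2 * δ ≤ u'.length) (h2 : b.length + 2 * δ ≤ u''.length) :
    ∃ v' v'' c : List α, v = v' ++ v'' ∧ IsGeodesicWord σ c ∧ c.length ≤ 2 * δ ∧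
      evalW σ v' * evalW σ c = evalW σ a * evalW σ u' ∧
      evalW σ v'' * evalW σ b = evalW σ c * evalW σ u'' := by
  subst hsplit
  have htd := geodesic_take_drop σ hgen hu (i := u'.length) (by simp)
  rw [List.take_left, List.drop_left] at htd
  have hlen_u' : wlen σ (evalW σ u') = u'.length := htd.1
  have hlen_u'' : wlen σ (evalW σ u'') = u''.length := by
    rw [htd.2]; simp
  -- the diagonal word
  obtain ⟨d, hd_eval, hd_geo, hd_len⟩ :=
    exists_geodesic_rep σ hgen (evalW σ a * evalW σ (u' ++ u''))⁻¹
  have tri1 : evalW σ (u' ++ u'') * evalW σ d * evalW σ a = 1 := by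
    rw [hd_eval]; group
  obtain ⟨j, hj⟩ := hhyp (u' ++ u'') d a hu hd_geo ha tri1 u'.length (by simp)
  rw [List.take_left] at hj
  -- p is the point eval a * eval u' on the side u
  -- key : p is 2δ-close to a point on the side v
  have key : ∃ k ≤ v.length,
      gdist σ (evalW σ a * evalW σ u') (evalW σ (v.take k)) ≤ 2 * δ := by
    rcases hj with ⟨hjd, hjdist⟩ | ⟨hja, hjadist⟩
    · -- close to the diagonal; use the second triangle
      have hpm : gdist σ (evalW σ a * evalW σ u')
          (evalW σ a * (evalW σ (u' ++ u'') * evalW σ (d.take j))) ≤ δ := by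
        rw [gdist_left]; exact hjdist
      have tri2 : evalW σ d * evalW σ v * evalW σ b = 1 := by
        rw [mul_assoc, heq, hd_eval]; group
      obtain ⟨k, hk⟩ := hhyp d v b hd_geo hv hb tri2 j hjd
      rcases hk with ⟨hkv, hkdist⟩ | ⟨hkb, hkdist⟩
      · -- close to side v : done
        refine ⟨k, hkv, ?_⟩
        have hmq : gdist σ (evalW σ a * (evalW σ (u' ++ u'') * evalW σ (d.take j)))
            (evalW σ (v.take k)) ≤ δ := by
          have := (gdist_left σ (evalW σ a * evalW σ (u' ++ u''))
            (evalW σ (d.take j)) (evalW σ d * evalW σ (v.take k))).symm ▸ hkdist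
          have heqpt : evalW σ a * evalW σ (u' ++ u'') * (evalW σ d * evalW σ (v.take k))
              = evalW σ (v.take k) := by rw [hd_eval]; group
          rw [heqpt, mul_assoc] at this
          exact this
        calc gdist σ (evalW σ a * evalW σ u') (evalW σ (v.take k))
            ≤ gdist σ (evalW σ a * evalW σ u')
                (evalW σ a * (evalW σ (u' ++ u'') * evalW σ (d.take j)))
              + gdist σ (evalW σ a * (evalW σ (u' ++ u'') * evalW σ (d.take j)))
                (evalW σ (v.take k)) := gdist_triangle σ hgen _ _ _
          _ ≤ δ + δ := Nat.add_le_add hpm hmq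
          _ ≤ 2 * δ := by omega
      · -- close to side b : forced to the corner eval v
        have hmq : gdist σ (evalW σ a * (evalW σ (u' ++ u'') * evalW σ (d.take j)))
            (evalW σ v * evalW σ (b.take k)) ≤ δ := by
          have := (gdist_left σ (evalW σ a * evalW σ (u' ++ u''))
            (evalW σ (d.take j)) (evalW σ d * evalW σ v * evalW σ (b.take k))).symm ▸ hkdist
          have heqpt : evalW σ a * evalW σ (u' ++ u'')
              * (evalW σ d * evalW σ v * evalW σ (b.take k))
              = evalW σ v * evalW σ (b.take k) := by rw [hd_eval]; group
          rw [heqpt, mul_assoc] at this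
          exact this
        have hpq : gdist σ (evalW σ a * evalW σ u') (evalW σ v * evalW σ (b.take k)) ≤ 2 * δ := by
          calc gdist σ (evalW σ a * evalW σ u') (evalW σ v * evalW σ (b.take k))
              ≤ gdist σ (evalW σ a * evalW σ u')
                  (evalW σ a * (evalW σ (u' ++ u'') * evalW σ (d.take j)))
                + gdist σ (evalW σ a * (evalW σ (u' ++ u'') * evalW σ (d.take j)))
                  (evalW σ v * evalW σ (b.take k)) := gdist_triangle σ hgen _ _ _
            _ ≤ δ + δ := Nat.add_le_add hpm hmq
            _ ≤ 2 * δ := by omega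
        -- distances to the corner C = eval v * eval b
        have hpC : gdist σ (evalW σ a * evalW σ u') (evalW σ v * evalW σ b) = u''.length := by
          have h5 : (evalW σ a * evalW σ u')⁻¹ * (evalW σ v * evalW σ b) = evalW σ u'' := by
            rw [heq, evalW_append]; group
          rw [gdist, h5, hlen_u'']
        have hqC : gdist σ (evalW σ v * evalW σ (b.take k)) (evalW σ v * evalW σ b)
            = b.length - k := by
          have hb5 : evalW σ (b.take k) * evalW σ (b.drop k) = evalW σ b := by
            rw [← evalW_append, List.take_append_drop]
          have h5 : (evalW σ v * evalW σ (b.take k))⁻¹ * (evalW σ v * evalW σ b)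
              = evalW σ (b.drop k) := by rw [← hb5]; group
          rw [gdist, h5]
          exact (geodesic_take_drop σ hgen hb hkb).2
        have htri := gdist_triangle σ hgen (evalW σ a * evalW σ u')
          (evalW σ v * evalW σ (b.take k)) (evalW σ v * evalW σ b)
        rw [hpC, hqC] at htri
        have hk0 : k = 0 := by omega
        subst hk0
        refine ⟨v.length, le_refl _, ?_⟩
        have : evalW σ (v.take v.length) = evalW σ v * evalW σ (b.take 0) := by
          simp [List.take_length, evalW]
        rw [this]
        exact hpq
    · -- close to side a : forced to the corner 1
      have hpq : gdist σ (evalW σ a * evalW σ u') (evalW σ (a.take j)) ≤ δ := by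
        have := (gdist_left σ (evalW σ a) (evalW σ u')
          (evalW σ (u' ++ u'') * evalW σ d * evalW σ (a.take j))).symm ▸ hjadist
        have heqpt : evalW σ a * (evalW σ (u' ++ u'') * evalW σ d * evalW σ (a.take j))
            = evalW σ (a.take j) := by
          have h6 : evalW σ a * (evalW σ (u' ++ u'') * evalW σ d) = 1 := by
            rw [hd_eval]; group
          rw [show evalW σ a * (evalW σ (u' ++ u'') * evalW σ d * evalW σ (a.take j))
              = evalW σ a * (evalW σ (u' ++ u'') * evalW σ d) * evalW σ (a.take j) by group,
            h6, one_mul]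
        rw [heqpt] at this
        exact this
      have hpA : gdist σ (evalW σ a * evalW σ u') (evalW σ a) = u'.length := by
        have h5 : (evalW σ a * evalW σ u')⁻¹ * evalW σ a = (evalW σ u')⁻¹ := by group
        rw [gdist, h5, wlen_inv σ hsym, hlen_u']
      have hqA : gdist σ (evalW σ (a.take j)) (evalW σ a) = a.length - j := by
        have ha5 : evalW σ (a.take j) * evalW σ (a.drop j) = evalW σ a := by
          rw [← evalW_append, List.take_append_drop]
        have h5 : (evalW σ (a.take j))⁻¹ * evalW σ a = evalW σ (a.drop j) := by
          rw [← ha5]; group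
        rw [gdist, h5]
        exact (geodesic_take_drop σ hgen ha hja).2
      have htri := gdist_triangle σ hgen (evalW σ a * evalW σ u')
        (evalW σ (a.take j)) (evalW σ a)
      rw [hpA, hqA] at htri
      have hj0 : j = 0 := by omega
      subst hj0
      refine ⟨0, Nat.zero_le _, ?_⟩
      have : evalW σ (v.take 0) = evalW σ (a.take 0) := by simp [evalW]
      rw [this]
      omega
  -- conclude
  obtain ⟨k, hkle, hkdist⟩ := key
  obtain ⟨c, hc_eval, hc_geo, hc_len⟩ := exists_geodesic_rep σ hgen
    ((evalW σ (v.take k))⁻¹ * (evalW σ a * evalW σ u'))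
  refine ⟨v.take k, v.drop k, c, (List.take_append_drop k v).symm, hc_geo, ?_, ?_, ?_⟩
  · rw [hc_len]
    calc wlen σ ((evalW σ (v.take k))⁻¹ * (evalW σ a * evalW σ u'))
        = gdist σ (evalW σ (v.take k)) (evalW σ a * evalW σ u') := rfl
      _ = gdist σ (evalW σ a * evalW σ u') (evalW σ (v.take k)) := gdist_symm σ hsym _ _
      _ ≤ 2 * δ := hkdist
  · rw [hc_eval]; group
  · have h5 : evalW σ v = evalW σ (v.take k) * evalW σ (v.drop k) := by
      rw [← evalW_append, List.take_append_drop]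
    rw [evalW_append] at heq
    calc evalW σ (v.drop k) * evalW σ b
        = (evalW σ (v.take k))⁻¹ * (evalW σ v * evalW σ b) := by rw [h5]; group
      _ = (evalW σ (v.take k))⁻¹ * (evalW σ a * (evalW σ u' * evalW σ u'')) := by rw [heq]
      _ = evalW σ c * evalW σ u'' := by rw [hc_eval]; group
end

section
/- Let w be a word of length n ≥ 1 over an alphabet Σ. The shortest prefix y of w such that w = y^ℓ for some ℓ ≥ 1 has length equal to p, where p is the least positive integer such that w occurs as a factor of w·w starting at position p. -/
/-- `w` occurs as a factor of `z` starting at position `p`. -/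
def OccursAt {α : Type*} (w z : List α) (p : ℕ) : Prop :=
  ∃ x y : List α, z = x ++ w ++ y ∧ x.length = p

/-!
If `w` occurs in `w·w` at position `p ≤ |w|`, then `u = w[0,p)` and `v = w[p,|w|)` satisfy
`u·v = w = v·u`. Commuting words are powers of a common word `t`, so `w` is a power of `t`
and hence occurs in `w·w` at position `|t|`; as `|t| ≤ |u| = p`, minimality of `p` forces
`t = u`.
Conversely every root `y` of `w` gives the occurrence of `w` at position `|y|`.
-/

section

variable {α : Type*}

theorem repw_add (t : List α) (a b : ℕ) : repw t (a + b) = repw t a ++ repw t b := by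
  induction a with
  | zero => simp [repw]
  | succ a ih => rw [Nat.add_right_comm, repw, repw, ih, List.append_assoc]

theorem repw_one (t : List α) : repw t 1 = t := by
  simp [repw]

theorem length_repw (t : List α) (a : ℕ) : (repw t a).length = a * t.length := by
  induction a with
  | zero => simp [repw]
  | succ a ih => simp only [repw, List.length_append, ih]; ring

theorem OccursAt.add_length_le {w z : List α} {p : ℕ} (h : OccursAt w z p) :
    p + w.length ≤ z.length := by
  obtain ⟨x, y, rfl, rfl⟩ := h
  simp

theorem OccursAt.drop_append_take {w : List α} {p : ℕ} (h : OccursAt w (w ++ w) p) :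
    w.drop p ++ w.take p = w := by
  have hpn : p ≤ w.length := by simpa using h.add_length_le
  obtain ⟨x, y, hxy, hx⟩ := h
  have hshift : w.drop p ++ w = w ++ y := by
    have : w.take p ++ (w.drop p ++ w) = x ++ (w ++ y) := by
      rw [← List.append_assoc, List.take_append_drop, hxy, List.append_assoc]
    exact (List.append_inj this (by simp [hx, hpn])).2
  have : (w.drop p ++ w.take p) ++ w.drop p = w ++ y := by
    rw [List.append_assoc, List.take_append_drop, hshift]
  exact (List.append_inj this (by simp; omega)).1

theorem occursAt_append_self_of_eq_repw {w u : List α} {ℓ : ℕ} (hℓ : 1 ≤ ℓ)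
    (h : w = repw u ℓ) : OccursAt w (w ++ w) u.length := by
  refine ⟨u, repw u (ℓ - 1), ?_, rfl⟩
  rw [h, ← repw_add, show ℓ + ℓ = 1 + ℓ + (ℓ - 1) by omega, repw_add, repw_add, repw_one]

/-- The step of the Euclidean algorithm on commuting words. -/
theorem exists_eq_append_of_append_comm {y z : List α} (hle : y.length ≤ z.length)
    (h : y ++ z = z ++ y) : ∃ z', z = y ++ z' ∧ y ++ z' = z' ++ y := by
  have hy : y = z.take y.length := by
    have : y ++ z = z.take y.length ++ (z.drop y.length ++ y) := by
      rw [h, ← List.append_assoc, List.take_append_drop]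
    exact (List.append_inj this (by simp [hle])).1
  have hz : z = y ++ z.drop y.length := by
    conv_lhs => rw [← List.take_append_drop y.length z, ← hy]
  refine ⟨z.drop y.length, hz, List.append_cancel_left (as := y) ?_⟩
  rw [← hz, ← List.append_assoc, ← hz, h]

theorem exists_repw_of_append_comm {y z : List α} (h : y ++ z = z ++ y) :
    ∃ t a b, y = repw t a ∧ z = repw t b := by
  induction hn : y.length + z.length using Nat.strong_induction_on generalizing y z with
  | _ n ih =>
  wlog hle : y.length ≤ z.length generalizing y z
  · obtain ⟨t, a, b, hz, hy⟩ := this h.symm (by omega) (by omega)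
    exact ⟨t, b, a, hy, hz⟩
  rcases eq_or_ne y [] with rfl | hy
  · exact ⟨z, 0, 1, rfl, (repw_one z).symm⟩
  obtain ⟨z', rfl, hcomm⟩ := exists_eq_append_of_append_comm hle h
  have hlt : y.length + z'.length < n := by
    have := List.length_pos_of_ne_nil hy
    simp only [List.length_append] at hn
    omega
  obtain ⟨t, a, b, rfl, rfl⟩ := ih _ hlt hcomm rfl
  exact ⟨t, a, a + b, rfl, (repw_add t a b).symm⟩

theorem le_length_of_eq_repw {w u : List α} {p ℓ : ℕ}
    (hleast : ∀ q : ℕ, 0 < q → OccursAt w (w ++ w) q → p ≤ q) (hw : w ≠ [])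
    (hℓ : 1 ≤ ℓ) (h : w = repw u ℓ) : p ≤ u.length := by
  refine hleast _ ?_ (occursAt_append_self_of_eq_repw hℓ h)
  have hlen : w.length = ℓ * u.length := by rw [h, length_repw]
  exact Nat.pos_of_mul_pos_left (hlen ▸ List.length_pos_of_ne_nil hw)

end

theorem shortest_root_eq_least_period_general {α : Type*} (w : List α)
    (p : ℕ) (hp : 0 < p) (hocc : OccursAt w (w ++ w) p)
    (hleast : ∀ q : ℕ, 0 < q → OccursAt w (w ++ w) q → p ≤ q) :
    (∃ ℓ : ℕ, 1 ≤ ℓ ∧ w = repw (w.take p) ℓ) ∧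
      ∀ q : ℕ, (∃ ℓ : ℕ, 1 ≤ ℓ ∧ w = repw (w.take q) ℓ) → p ≤ q := by
  have hpn : p ≤ w.length := by simpa using hocc.add_length_le
  have hw : w ≠ [] := List.ne_nil_of_length_pos (by omega)
  have hcomm : w.take p ++ w.drop p = w.drop p ++ w.take p := by
    rw [List.take_append_drop, hocc.drop_append_take]
  obtain ⟨t, a, b, hu, hv⟩ := exists_repw_of_append_comm hcomm
  have hlen : p = a * t.length := by rw [← length_repw, ← hu, List.length_take_of_le hpn]
  have ha : 1 ≤ a := Nat.pos_of_mul_pos_right (hlen ▸ hp)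
  have hwt : w = repw t (a + b) := by rw [repw_add, ← hu, ← hv, List.take_append_drop]
  have hpt : p ≤ t.length := le_length_of_eq_repw hleast hw (by omega) hwt
  have hut : w.take p = t := by
    rw [hu, show a = 1 by nlinarith, repw_one]
  refine ⟨⟨a + b, by omega, hut ▸ hwt⟩, ?_⟩
  rintro q ⟨ℓ, hℓ, hq⟩
  exact (le_length_of_eq_repw hleast hw hℓ hq).trans (List.length_take_le q w)

/-- For a nonempty word `w`, the shortest prefix `y` of `w` with `w = y^ℓ` for some
`ℓ ≥ 1` has length `p`, where `p` is the least positive position at which `w`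
occurs as a factor of `w·w`. -/
theorem shortest_root_eq_least_period {α : Type*} (w : List α) (hw : 1 ≤ w.length)
    (p : ℕ) (hp : 0 < p) (hocc : OccursAt w (w ++ w) p)
    (hleast : ∀ q : ℕ, 0 < q → OccursAt w (w ++ w) q → p ≤ q) :
    (∃ ℓ : ℕ, 1 ≤ ℓ ∧ w = repw (w.take p) ℓ) ∧
      ∀ q : ℕ, (∃ ℓ : ℕ, 1 ≤ ℓ ∧ w = repw (w.take q) ℓ) → p ≤ q :=
  shortest_root_eq_least_period_general w p hp hocc hleast
end
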